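/- Let s ∈ ℝ and let u_S, w_S : ℝ² × ℝ → ℝ² and u_T, w_T, θ_S : ℝ² × ℝ → ℝ be smooth, satisfying on ℝ² × ℝ the relabelling-symmetry equations ∂_t w_S + [u_S, w_S] = 0 and ∂_t w_T + u_S·∇w_T − w_S·∇u_T = 0, and the transport equation ∂_t θ_S + u_S·∇θ_S + s·u_T = 0. Then the function F := w_S·∇θ_S + s·w_T satisfies the transport equation ∂_t F + u_S·∇F = 0 on ℝ² × ℝ. -/

import Mathlib

/-- Partial derivative in time of a time-dependent field on the slice ℝ². -/
noncomputable def pt {α : Type*} [NormedAddCommGroup α] [NormedSpace ℝ α]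
    (g : (ℝ × ℝ) → ℝ → α) (x : ℝ × ℝ) (t : ℝ) : α :=
  deriv (fun τ => g x τ) t

/-- Spatial directional derivative of a time-dependent field, in direction `v`. -/
noncomputable def dsp {α : Type*} [NormedAddCommGroup α] [NormedSpace ℝ α]
    (g : (ℝ × ℝ) → ℝ → α) (x : ℝ × ℝ) (t : ℝ) (v : ℝ × ℝ) : α :=
  fderiv ℝ (fun y => g y t) x v

/-- Unit vector in the x-direction. -/
def ex : ℝ × ℝ := (1, 0)

/-- Unit vector in the z-direction. -/
def ez : ℝ × ℝ := (0, 1)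

/-- Euclidean dot product on ℝ². -/
def dot (a b : ℝ × ℝ) : ℝ := a.1 * b.1 + a.2 * b.2

/-- Spatial gradient of a time-dependent scalar field. -/
noncomputable def grad (g : (ℝ × ℝ) → ℝ → ℝ) (x : ℝ × ℝ) (t : ℝ) : ℝ × ℝ :=
  (dsp g x t ex, dsp g x t ez)

/-- `(gradT u w)ᵢ = Σⱼ (∂ᵢ uⱼ) wⱼ`, i.e. `(∇u)ᵀ w`. -/
noncomputable def gradT (u w : (ℝ × ℝ) → ℝ → ℝ × ℝ) (x : ℝ × ℝ) (t : ℝ) : ℝ × ℝ :=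
  (dot (dsp u x t ex) (w x t), dot (dsp u x t ez) (w x t))

/-- Divergence `∂ₓ u₁ + ∂_z u₂` of a time-dependent vector field. -/
noncomputable def div2 (u : (ℝ × ℝ) → ℝ → ℝ × ℝ) (x : ℝ × ℝ) (t : ℝ) : ℝ :=
  dsp (fun y τ => (u y τ).1) x t ex + dsp (fun y τ => (u y τ).2) x t ez

/-- A time-dependent field is smooth (C^∞) jointly in space and time. -/
def Smooth2 {α : Type*} [NormedAddCommGroup α] [NormedSpace ℝ α]
    (g : (ℝ × ℝ) → ℝ → α) : Prop :=
  ContDiff ℝ (⊤ : ℕ∞) (fun p : (ℝ × ℝ) × ℝ => g p.1 p.2)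

section helpers

variable {α : Type*} [NormedAddCommGroup α] [NormedSpace ℝ α]

lemma pt_eq (g : (ℝ × ℝ) → ℝ → α) (x : ℝ × ℝ) (t : ℝ)
    (hg : DifferentiableAt ℝ (fun p : (ℝ × ℝ) × ℝ => g p.1 p.2) (x, t)) :
    pt g x t = fderiv ℝ (fun p : (ℝ × ℝ) × ℝ => g p.1 p.2) (x, t) (0, 1) := by
  have h1 : HasDerivAt (fun τ : ℝ => ((x, τ) : (ℝ × ℝ) × ℝ)) (((0 : ℝ × ℝ), (1 : ℝ))) t :=
    (hasDerivAt_const t x).prodMk (hasDerivAt_id t)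
  have h2 := hg.hasFDerivAt.comp_hasDerivAt t h1
  exact h2.deriv

lemma dsp_eq (g : (ℝ × ℝ) → ℝ → α) (x : ℝ × ℝ) (t : ℝ) (v : ℝ × ℝ)
    (hg : DifferentiableAt ℝ (fun p : (ℝ × ℝ) × ℝ => g p.1 p.2) (x, t)) :
    dsp g x t v = fderiv ℝ (fun p : (ℝ × ℝ) × ℝ => g p.1 p.2) (x, t) (v, 0) := by
  have h1 : HasFDerivAt (fun y : ℝ × ℝ => ((y, t) : (ℝ × ℝ) × ℝ))
      (ContinuousLinearMap.inl ℝ (ℝ × ℝ) ℝ) x :=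
    (hasFDerivAt_id x).prodMk (hasFDerivAt_const t x)
  have h2 : HasFDerivAt (fun y : ℝ × ℝ => g y t)
      ((fderiv ℝ (fun p : (ℝ × ℝ) × ℝ => g p.1 p.2) (x, t)).comp
        (ContinuousLinearMap.inl ℝ (ℝ × ℝ) ℝ)) x := by have := HasFDerivAt.comp x hg.hasFDerivAt h1; exact this
  have h3 := h2.fderiv
  simp only [dsp, h3]
  rfl

end helpers

section key

abbrev P2 := (ℝ × ℝ) × ℝ

lemma key (s : ℝ) (Θ UT WT : P2 → ℝ) (US W : P2 → ℝ × ℝ)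
    (hΘ : ContDiff ℝ (⊤ : ℕ∞) Θ) (hUS : ContDiff ℝ (⊤ : ℕ∞) US) (hUT : ContDiff ℝ (⊤ : ℕ∞) UT)
    (hW : ContDiff ℝ (⊤ : ℕ∞) W) (hWT : ContDiff ℝ (⊤ : ℕ∞) WT)
    (hrelS : ∀ q, fderiv ℝ W q (US q, 1) = fderiv ℝ US q (W q, 0))
    (hrelT : ∀ q, fderiv ℝ WT q (US q, 1) = fderiv ℝ UT q (W q, 0))
    (hθ : ∀ q, fderiv ℝ Θ q (US q, 1) + s * UT q = 0)
    (p : P2) :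
    fderiv ℝ (fun q => fderiv ℝ Θ q (W q, (0 : ℝ)) + s * WT q) p (US p, 1) = 0 := by
  have htop : (⊤ : WithTop ℕ∞) + 1 ≤ ⊤ := by simp
  have hΘd : Differentiable ℝ Θ := hΘ.differentiable (by simp)
  have hΘ' : ContDiff ℝ (⊤ : ℕ∞) (fderiv ℝ Θ) := hΘ.fderiv_right (by simp)
  have hΘ'd : Differentiable ℝ (fderiv ℝ Θ) := hΘ'.differentiable (by simp)
  set f'' := fderiv ℝ (fderiv ℝ Θ) p with hf''def
  have hc : HasFDerivAt (fderiv ℝ Θ) f'' p := (hΘ'd p).hasFDerivAt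
  have hsymm : ∀ v w : P2, f'' v w = f'' w v :=
    second_derivative_symmetric (fun y => (hΘd y).hasFDerivAt) hc
  -- differentiate the θ equation
  have hkU : HasFDerivAt (fun q : P2 => ((US q : ℝ × ℝ), (1 : ℝ)))
      ((fderiv ℝ US p).prod 0) p :=
    ((hUS.differentiable (by simp) p).hasFDerivAt).prodMk (hasFDerivAt_const 1 p)
  have hH1 : HasFDerivAt (fun q : P2 => fderiv ℝ Θ q (US q, 1) + s * UT q)
      (((fderiv ℝ Θ p).comp ((fderiv ℝ US p).prod 0) + f''.flip (US p, 1))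
        + s • fderiv ℝ UT p) p :=
    (hc.clm_apply hkU).add (((hUT.differentiable (by simp) p).hasFDerivAt).const_mul s)
  have hH0 : HasFDerivAt (fun q : P2 => fderiv ℝ Θ q (US q, 1) + s * UT q)
      (0 : P2 →L[ℝ] ℝ) p := by
    have : (fun q : P2 => fderiv ℝ Θ q (US q, 1) + s * UT q) = fun _ => (0 : ℝ) :=
      funext fun q => hθ q
    rw [this]; exact hasFDerivAt_const 0 p
  have hD0 := hH1.unique hH0
  have keyθ : fderiv ℝ Θ p (fderiv ℝ US p (W p, 0), 0)
      + f'' (W p, 0) (US p, 1) + s * fderiv ℝ UT p (W p, 0) = 0 := by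
    have := congrArg (fun (L : P2 →L[ℝ] ℝ) => L (W p, 0)) hD0
    simpa [ContinuousLinearMap.add_apply, ContinuousLinearMap.comp_apply,
      ContinuousLinearMap.flip_apply, ContinuousLinearMap.smul_apply,
      ContinuousLinearMap.prod_apply, smul_eq_mul, add_assoc] using this
  -- derivative of G
  have hkW : HasFDerivAt (fun q : P2 => ((W q : ℝ × ℝ), (0 : ℝ)))
      ((fderiv ℝ W p).prod 0) p :=
    ((hW.differentiable (by simp) p).hasFDerivAt).prodMk (hasFDerivAt_const 0 p)
  have hG : HasFDerivAt (fun q : P2 => fderiv ℝ Θ q (W q, (0 : ℝ)) + s * WT q)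
      (((fderiv ℝ Θ p).comp ((fderiv ℝ W p).prod 0) + f''.flip (W p, 0))
        + s • fderiv ℝ WT p) p :=
    (hc.clm_apply hkW).add (((hWT.differentiable (by simp) p).hasFDerivAt).const_mul s)
  rw [hG.fderiv]
  have e1 : fderiv ℝ W p (US p, 1) = fderiv ℝ US p (W p, 0) := hrelS p
  have e2 : fderiv ℝ WT p (US p, 1) = fderiv ℝ UT p (W p, 0) := hrelT p
  have e3 : f'' (US p, 1) (W p, 0) = f'' (W p, 0) (US p, 1) := hsymm _ _
  simp only [ContinuousLinearMap.add_apply, ContinuousLinearMap.comp_apply,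
    ContinuousLinearMap.flip_apply, ContinuousLinearMap.smul_apply,
    ContinuousLinearMap.prod_apply, ContinuousLinearMap.zero_apply, smul_eq_mul]
  rw [e1, e2, e3]
  linarith [keyθ]

end key

/-- If `(w_S, w_T)` satisfies the relabelling-symmetry equations
`∂_t w_S + [u_S, w_S] = 0`, `∂_t w_T + u_S·∇w_T − w_S·∇u_T = 0`, and θ_S satisfies
`∂_t θ_S + u_S·∇θ_S + s·u_T = 0`, then `F = w_S·∇θ_S + s·w_T` is transported:
`∂_t F + u_S·∇F = 0`. -/
theorem relabelling_theta_variation_transported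
    (s : ℝ) (uS wS : (ℝ × ℝ) → ℝ → ℝ × ℝ) (uT wT θS : (ℝ × ℝ) → ℝ → ℝ)
    (huS : Smooth2 uS) (hwS : Smooth2 wS) (huT : Smooth2 uT) (hwT : Smooth2 wT)
    (hθS : Smooth2 θS)
    (hrelS : ∀ x t, pt wS x t + dsp wS x t (uS x t) - dsp uS x t (wS x t) = 0)
    (hrelT : ∀ x t, pt wT x t + dsp wT x t (uS x t) - dsp uT x t (wS x t) = 0)
    (hθ : ∀ x t, pt θS x t + dsp θS x t (uS x t) + s * uT x t = 0) :
    ∀ (x : ℝ × ℝ) (t : ℝ),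
      pt (fun y τ => dsp θS y τ (wS y τ) + s * wT y τ) x t
        + dsp (fun y τ => dsp θS y τ (wS y τ) + s * wT y τ) x t (uS x t) = 0 := by
  intro x t
  set Θ : P2 → ℝ := fun p => θS p.1 p.2 with hΘdef
  set US : P2 → ℝ × ℝ := fun p => uS p.1 p.2 with hUSdef
  set W : P2 → ℝ × ℝ := fun p => wS p.1 p.2 with hWdef
  set UTf : P2 → ℝ := fun p => uT p.1 p.2 with hUTdef
  set WTf : P2 → ℝ := fun p => wT p.1 p.2 with hWTdef
  have hΘ : ContDiff ℝ (⊤ : ℕ∞) Θ := hθS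
  have hUS : ContDiff ℝ (⊤ : ℕ∞) US := huS
  have hW : ContDiff ℝ (⊤ : ℕ∞) W := hwS
  have hUT : ContDiff ℝ (⊤ : ℕ∞) UTf := huT
  have hWT : ContDiff ℝ (⊤ : ℕ∞) WTf := hwT
  have hΘda : ∀ q : P2, DifferentiableAt ℝ Θ q := fun q => (hΘ.differentiable (by simp) q)
  -- convert hypotheses
  have hrelS' : ∀ q : P2, fderiv ℝ W q (US q, 1) = fderiv ℝ US q (W q, 0) := by
    rintro ⟨y, τ⟩
    have h := hrelS y τ
    rw [pt_eq wS y τ (hW.differentiable (by simp) _),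
      dsp_eq wS y τ _ (hW.differentiable (by simp) _),
      dsp_eq uS y τ _ (hUS.differentiable (by simp) _)] at h
    have h2 := sub_eq_zero.mp h
    have hsplit : ((uS y τ, (1 : ℝ)) : P2) = (uS y τ, 0) + ((0 : ℝ × ℝ), 1) := by simp
    show fderiv ℝ W (y, τ) (uS y τ, 1) = fderiv ℝ US (y, τ) (wS y τ, 0)
    rw [hsplit, map_add, add_comm]
    exact h2
  have hrelT' : ∀ q : P2, fderiv ℝ WTf q (US q, 1) = fderiv ℝ UTf q (W q, 0) := by
    rintro ⟨y, τ⟩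
    have h := hrelT y τ
    rw [pt_eq wT y τ (hWT.differentiable (by simp) _),
      dsp_eq wT y τ _ (hWT.differentiable (by simp) _),
      dsp_eq uT y τ _ (hUT.differentiable (by simp) _)] at h
    have h2 := sub_eq_zero.mp h
    have hsplit : ((uS y τ, (1 : ℝ)) : P2) = (uS y τ, 0) + ((0 : ℝ × ℝ), 1) := by simp
    show fderiv ℝ WTf (y, τ) (uS y τ, 1) = fderiv ℝ UTf (y, τ) (wS y τ, 0)
    rw [hsplit, map_add, add_comm]
    exact h2
  have hθ' : ∀ q : P2, fderiv ℝ Θ q (US q, 1) + s * UTf q = 0 := by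
    rintro ⟨y, τ⟩
    have h := hθ y τ
    rw [pt_eq θS y τ (hΘda _),
      dsp_eq θS y τ _ (hΘda _)] at h
    have hsplit : ((uS y τ, (1 : ℝ)) : P2) = (uS y τ, 0) + ((0 : ℝ × ℝ), 1) := by simp
    show fderiv ℝ Θ (y, τ) (uS y τ, 1) + s * uT y τ = 0
    rw [hsplit, map_add]
    linarith
  -- rewrite F
  have hG : ContDiff ℝ (⊤ : ℕ∞) (fun q : P2 => fderiv ℝ Θ q ((W q : ℝ × ℝ), (0 : ℝ)) + s * WTf q) := by
    have hΘ' : ContDiff ℝ (⊤ : ℕ∞) (fderiv ℝ Θ) := hΘ.fderiv_right (by simp)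
    exact (hΘ'.clm_apply (hW.prodMk contDiff_const)).add (contDiff_const.mul hWT)
  have Feq : (fun (y : ℝ × ℝ) (τ : ℝ) => dsp θS y τ (wS y τ) + s * wT y τ)
      = fun (y : ℝ × ℝ) (τ : ℝ) =>
        fderiv ℝ Θ (y, τ) ((W (y, τ) : ℝ × ℝ), (0 : ℝ)) + s * WTf (y, τ) := by
    funext y τ
    rw [dsp_eq θS y τ _ (hΘda _)]
  rw [Feq]
  have hGd : DifferentiableAt ℝ
      (fun p : P2 => (fun (y : ℝ × ℝ) (τ : ℝ) =>
        fderiv ℝ Θ (y, τ) ((W (y, τ) : ℝ × ℝ), (0 : ℝ)) + s * WTf (y, τ)) p.1 p.2) (x, t) :=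
    (hG.differentiable (by simp)) (x, t)
  rw [pt_eq _ x t hGd, dsp_eq _ x t _ hGd]
  have hkey := key s Θ UTf WTf US W hΘ hUS hUT hW hWT hrelS' hrelT' hθ' (x, t)
  have hsplit : ((uS x t, (1 : ℝ)) : P2) = ((0 : ℝ × ℝ), 1) + (uS x t, 0) := by simp
  rw [hsplit, map_add] at hkey
  exact hkey
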